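/- Let −1 ≤ a < b < 1 with a + b ≥ 0, let d ≥ 1, and set γ = (2 − a − b)/(b − a). Suppose γ² > d. If v_1, …, v_n are unit vectors in ℝ^d such that ⟨v_i, v_j⟩ ∈ {a, b} for all i ≠ j, then n ≤ d·(γ² − 1)/(γ² − d). -/

import Mathlib

/-!
With `c = (a + b) / 2`, the matrix `A = G - c J` (`G` the Gram matrix of the `vᵢ`, `J` the all-ones
matrix) has diagonal entries `(2 - a - b) / 2` and off-diagonal entries `±(b - a) / 2`. Its
quadratic form `‖∑ xᵢ vᵢ‖² - c (∑ xᵢ)²` is nonpositive on the kernel of `x ↦ ∑ xᵢ vᵢ`, which has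
codimension at most `d`, so `A` has at most `d` positive eigenvalues. Discarding the nonpositive
eigenvalues and applying Cauchy–Schwarz to the others gives `(tr A)² ≤ d · tr (A²)`, that is
`n² (2 - a - b)² ≤ d n ((2 - a - b)² + (n - 1) (b - a)²)`, and `2 - a - b = γ (b - a)`.
-/

open Matrix Finset
open scoped InnerProductSpace

theorem sq_sum_le_mul_sum_sq_of_card_pos_le {ι : Type*} (s : Finset ι) (f : ι → ℝ) {d : ℕ}
    (hsum : 0 ≤ ∑ i ∈ s, f i) (hpos : #{i ∈ s | 0 < f i} ≤ d) :
    (∑ i ∈ s, f i) ^ 2 ≤ d * ∑ i ∈ s, f i ^ 2 := by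
  have hsplit := sum_filter_add_sum_filter_not s (0 < f ·) f
  have hnonpos : ∑ i ∈ s with ¬0 < f i, f i ≤ 0 :=
    sum_nonpos fun i hi => not_lt.mp (mem_filter.mp hi).2
  calc (∑ i ∈ s, f i) ^ 2 ≤ (∑ i ∈ s with 0 < f i, f i) ^ 2 :=
        pow_le_pow_left₀ hsum (by linarith) 2
    _ ≤ #{i ∈ s | 0 < f i} * ∑ i ∈ s with 0 < f i, f i ^ 2 := sq_sum_le_card_mul_sum_sq
    _ ≤ d * ∑ i ∈ s, f i ^ 2 := by
        gcongr
        exact filter_subset _ _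

namespace Matrix.IsHermitian

section RCLike

variable {𝕜 n : Type*} [RCLike 𝕜] [Fintype n] [DecidableEq n] {A : Matrix n n 𝕜}
  (hA : A.IsHermitian)
include hA

theorem trace_mul_self_eq_sum_sq_eigenvalues :
    (A * A).trace = ∑ i, (hA.eigenvalues i : 𝕜) ^ 2 := by
  conv_lhs => rw [hA.spectral_theorem, ← map_mul, Unitary.conjStarAlgAut_apply, trace_mul_cycle,
    Unitary.coe_star_mul_self, one_mul, diagonal_mul_diagonal, trace_diagonal]
  simp [sq]

theorem re_star_dotProduct_mulVec_eq_sum (x : EuclideanSpace 𝕜 n) :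
    RCLike.re (star ⇑x ⬝ᵥ (A *ᵥ ⇑x)) =
      ∑ i, hA.eigenvalues i * ‖⟪hA.eigenvectorBasis i, x⟫_𝕜‖ ^ 2 := by
  set u := hA.eigenvectorBasis
  have hT := isSymmetric_toEuclideanLin_iff.mpr hA
  have hTu (i : n) : toEuclideanLin A (u i) = (hA.eigenvalues i : 𝕜) • u i := by
    rw [toLpLin_apply, hA.mulVec_eigenvectorBasis, ← RCLike.real_smul_eq_coe_smul]
    rfl
  have hform : star ⇑x ⬝ᵥ (A *ᵥ ⇑x) = ⟪x, toEuclideanLin A x⟫_𝕜 := by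
    rw [EuclideanSpace.inner_eq_star_dotProduct, dotProduct_comm]; rfl
  rw [hform, ← u.sum_inner_mul_inner, map_sum]
  refine sum_congr rfl fun i _ => ?_
  rw [← hT, hTu, inner_smul_left, ← inner_conj_symm x, RCLike.conj_ofReal, mul_left_comm,
    RCLike.conj_mul]
  norm_cast

theorem card_pos_eigenvalues_add_finrank_le (W : Submodule 𝕜 (EuclideanSpace 𝕜 n))
    (hW : ∀ x ∈ W, RCLike.re (star ⇑x ⬝ᵥ (A *ᵥ ⇑x)) ≤ 0) :
    #{i | 0 < hA.eigenvalues i} + Module.finrank 𝕜 W ≤ Fintype.card n := by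
  set u := hA.eigenvectorBasis
  let ψ : W →ₗ[𝕜] ({i // ¬0 < hA.eigenvalues i} → 𝕜) :=
    LinearMap.pi fun i => innerₛₗ 𝕜 (u i) ∘ₗ W.subtype
  -- The form is positive definite on the span of the positive eigenvectors, so on `W` the
  -- remaining eigen-coordinates already determine the vector.
  have hψ : Function.Injective ψ := by
    refine (injective_iff_map_eq_zero ψ).mpr fun x hx => ?_
    have hneg (i) (hi : ¬0 < hA.eigenvalues i) : ⟪u i, (x : EuclideanSpace 𝕜 n)⟫_𝕜 = 0 :=
      congr_fun hx ⟨i, hi⟩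
    have hterm (i) : 0 ≤ hA.eigenvalues i * ‖⟪u i, (x : EuclideanSpace 𝕜 n)⟫_𝕜‖ ^ 2 := by
      by_cases hi : 0 < hA.eigenvalues i
      · positivity
      · simp [hneg i hi]
    have hsum := hA.re_star_dotProduct_mulVec_eq_sum x ▸ hW x x.2
    have hpos (i) (hi : 0 < hA.eigenvalues i) : ⟪u i, (x : EuclideanSpace 𝕜 n)⟫_𝕜 = 0 := by
      have := (sum_eq_zero_iff_of_nonneg fun i _ => hterm i).mp
        (le_antisymm hsum (sum_nonneg fun i _ => hterm i)) i (mem_univ i)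
      simpa [hi.ne'] using this
    have hall (i) : ⟪u i, (x : EuclideanSpace 𝕜 n)⟫_𝕜 = 0 := by
      by_cases hi : 0 < hA.eigenvalues i
      exacts [hpos i hi, hneg i hi]
    rw [← Submodule.coe_eq_zero, ← u.sum_repr' x]
    simp [hall]
  have hW := LinearMap.finrank_le_finrank_of_injective hψ
  rw [Module.finrank_fintype_fun_eq_card, Fintype.card_subtype] at hW
  have := card_filter_add_card_filter_not (s := univ) (fun i => 0 < hA.eigenvalues i)
  simp only [card_univ] at this
  omega

end RCLike

theorem trace_sq_le_mul_trace_mul_self {n : Type*} [Fintype n] [DecidableEq n]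
    {A : Matrix n n ℝ} (hA : A.IsHermitian) {d : ℕ} (htr : 0 ≤ A.trace)
    (hpos : #{i | 0 < hA.eigenvalues i} ≤ d) : A.trace ^ 2 ≤ d * (A * A).trace := by
  rw [hA.trace_mul_self_eq_sum_sq_eigenvalues]
  rw [hA.trace_eq_sum_eigenvalues] at htr ⊢
  simpa using sq_sum_le_mul_sum_sq_of_card_pos_le univ hA.eigenvalues (by simpa using htr) hpos

theorem trace_mul_self_eq_of_diag_of_sq_offDiag {ι : Type*} [Fintype ι] [DecidableEq ι]
    {A : Matrix ι ι ℝ} (hA : A.IsHermitian) {g h : ℝ}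
    (hdiag : ∀ i, A i i = g) (hoff : ∀ i j, i ≠ j → A i j ^ 2 = h) :
    (A * A).trace = Fintype.card ι * (g ^ 2 + (Fintype.card ι - 1) * h) := by
  have hentry (i j) : A i j * A j i = h + if i = j then g ^ 2 - h else 0 := by
    rw [← hA.apply j i, star_trivial, ← sq]
    split_ifs with hij
    · rw [hij, hdiag]; ring
    · rw [hoff i j hij, add_zero]
  simp only [trace, diag_apply, mul_apply, hentry, sum_add_distrib, sum_ite_eq, mem_univ,
    if_true, sum_const, card_univ, nsmul_eq_mul]
  ring

end Matrix.IsHermitian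

section TwoDistance

variable {E ι : Type*} [NormedAddCommGroup E] [InnerProductSpace ℝ E] [FiniteDimensional ℝ E]
  [Fintype ι] [DecidableEq ι]

theorem card_pos_eigenvalues_gram_sub_le (v : ι → E) {c : ℝ} (hc : 0 ≤ c)
    (hA : (gram ℝ v - c • of fun _ _ => 1).IsHermitian) :
    #{i | 0 < hA.eigenvalues i} ≤ Module.finrank ℝ E := by
  let L : EuclideanSpace ℝ ι →ₗ[ℝ] E :=
    Fintype.linearCombination ℝ v ∘ₗ (WithLp.linearEquiv 2 ℝ (ι → ℝ)).toLinearMap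
  have hform (x : EuclideanSpace ℝ ι) (hx : x ∈ LinearMap.ker L) :
      RCLike.re (star ⇑x ⬝ᵥ ((gram ℝ v - c • of fun _ _ => 1) *ᵥ ⇑x)) ≤ 0 := by
    have hx : ∑ i, x i • v i = 0 := by simpa [L, Fintype.linearCombination_apply] using hx
    simp only [sub_mulVec, dotProduct_sub, star_dotProduct_gram_mulVec, hx, inner_zero_left]
    simp only [dotProduct, Pi.star_apply, star_trivial, mulVec, Matrix.smul_apply, of_apply,
      smul_eq_mul, mul_one, ← mul_sum, ← sum_mul, zero_sub, RCLike.re_to_real,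
      Left.neg_nonpos_iff]
    rw [mul_left_comm]
    exact mul_nonneg hc (mul_self_nonneg _)
  have hker := hA.card_pos_eigenvalues_add_finrank_le _ hform
  have hrank := L.finrank_range_add_finrank_ker
  have hrange := Submodule.finrank_le (LinearMap.range L)
  rw [finrank_euclideanSpace] at hrank
  omega

theorem sq_card_mul_le_of_two_distance (v : ι → E) (hunit : ∀ i, ‖v i‖ = 1) {a b : ℝ}
    (hsum : 0 ≤ a + b) (hle : a + b ≤ 2)
    (hinner : ∀ i j, i ≠ j → ⟪v i, v j⟫_ℝ = a ∨ ⟪v i, v j⟫_ℝ = b) :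
    (Fintype.card ι * (2 - a - b)) ^ 2 ≤ Module.finrank ℝ E *
      (Fintype.card ι * ((2 - a - b) ^ 2 + (Fintype.card ι - 1) * (b - a) ^ 2)) := by
  set c := (a + b) / 2
  set A := gram ℝ v - c • of fun _ _ => (1 : ℝ)
  have hentry (i j) : A i j = ⟪v i, v j⟫_ℝ - c := by simp [A]
  have hA : A.IsHermitian := IsHermitian.ext fun i j => by simp [hentry, real_inner_comm]
  have hdiag (i) : A i i = (2 - a - b) / 2 := by
    rw [hentry, real_inner_self_eq_norm_sq, hunit]; ring
  have hoff (i j) (hij : i ≠ j) : A i j ^ 2 = ((b - a) / 2) ^ 2 := by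
    rcases hinner i j hij with h | h <;> rw [hentry, h] <;> ring
  have htrace : A.trace = Fintype.card ι * ((2 - a - b) / 2) := by
    simp [trace, hdiag]
  have key := hA.trace_sq_le_mul_trace_mul_self
    (by rw [htrace]; exact mul_nonneg (Nat.cast_nonneg _) (by linarith))
    (card_pos_eigenvalues_gram_sub_le v (by positivity) hA)
  rw [htrace, hA.trace_mul_self_eq_of_diag_of_sq_offDiag hdiag hoff] at key
  linarith

end TwoDistance

theorem stmt10_general (d n : ℕ)
    (a b : ℝ) (hab : a < b) (hb : b < 1) (hsum : 0 ≤ a + b)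
    (γ : ℝ) (hγ : γ = (2 - a - b) / (b - a)) (hγ2 : γ ^ 2 > (d : ℝ))
    (v : Fin n → EuclideanSpace ℝ (Fin d))
    (hunit : ∀ i, ‖v i‖ = 1)
    (hinner : ∀ i j, i ≠ j →
      (inner ℝ (v i) (v j) : ℝ) = a ∨ (inner ℝ (v i) (v j) : ℝ) = b) :
    (n : ℝ) ≤ (d : ℝ) * (γ ^ 2 - 1) / (γ ^ 2 - (d : ℝ)) := by
  have hba : 0 < b - a := sub_pos.mpr hab
  have hγba : 2 - a - b = γ * (b - a) := by rw [hγ]; field_simp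
  have hγ1 : 1 ≤ γ := by rw [hγ, le_div_iff₀ hba]; linarith
  have key := sq_card_mul_le_of_two_distance v hunit hsum (by linarith) hinner
  rw [Fintype.card_fin, finrank_euclideanSpace_fin, hγba] at key
  rcases n.eq_zero_or_pos with rfl | hn
  · rw [Nat.cast_zero]
    exact div_nonneg (mul_nonneg d.cast_nonneg (by nlinarith)) (by linarith)
  rw [le_div_iff₀ (by linarith)]
  have hscale : (0 : ℝ) < n * (b - a) ^ 2 := by positivity
  have hnγ : (n : ℝ) * γ ^ 2 ≤ d * (γ ^ 2 + (n - 1)) :=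
    le_of_mul_le_mul_left (by linear_combination key) hscale
  linarith

/-- Theorem B: the bound for spherical two-distance sets in
`S^{d-1}` with `a + b ≥ 0`, where `γ = (2−a−b)/(b−a)` and `γ² > d`. -/
theorem stmt10 (d n : ℕ) (hd : 1 ≤ d)
    (a b : ℝ) (ha : -1 ≤ a) (hab : a < b) (hb : b < 1) (hsum : 0 ≤ a + b)
    (γ : ℝ) (hγ : γ = (2 - a - b) / (b - a)) (hγ2 : γ ^ 2 > (d : ℝ))
    (v : Fin n → EuclideanSpace ℝ (Fin d))
    (hunit : ∀ i, ‖v i‖ = 1)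
    (hinner : ∀ i j, i ≠ j →
      (inner ℝ (v i) (v j) : ℝ) = a ∨ (inner ℝ (v i) (v j) : ℝ) = b) :
    (n : ℝ) ≤ (d : ℝ) * (γ ^ 2 - 1) / (γ ^ 2 - (d : ℝ)) :=
  stmt10_general d n a b hab hb hsum γ hγ hγ2 v hunit hinner
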